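/- Let S = M_{d_1}(ℂ) ⊕ ⋯ ⊕ M_{d_k}(ℂ). The kernel of the map D : S⊗S → DDer(S), x ↦ d_x, namely the set {x ∈ S⊗S : x·(1⊗y) = (y⊗1)·x for all y ∈ S}, is spanned by the elements g^i_{ab} := ∑_{p=1}^{d_i} e^i_{pb} ⊗ e^i_{ap} for 1 ≤ i ≤ k and 1 ≤ a,b ≤ d_i; these elements are linearly independent, so the kernel has ℂ-dimension ∑_{i=1}^k d_i² and is isomorphic as a ℂ-vector space to M_{d_1}(ℂ) ⊕ ⋯ ⊕ M_{d_k}(ℂ). -/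

import Mathlib

open TensorProduct

set_option synthInstance.maxHeartbeats 1000000
set_option maxHeartbeats 1000000

noncomputable section

/-- The finite dimensional semisimple algebra `S = M_{d 0}(ℂ) ⊕ ⋯ ⊕ M_{d (k-1)}(ℂ)`. -/
abbrev MatS (k : ℕ) (d : Fin k → ℕ) : Type :=
  ∀ i : Fin k, Matrix (Fin (d i)) (Fin (d i)) ℂ

variable (k : ℕ) (d : Fin k → ℕ)

/-- `θ` is a double derivation for the outer bimodule structure on `S ⊗ S`. -/
def IsDD (θ : MatS k d →ₗ[ℂ] MatS k d ⊗[ℂ] MatS k d) : Prop :=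
  ∀ a b : MatS k d,
    θ (a * b) = (a ⊗ₜ[ℂ] (1 : MatS k d)) * θ b + θ a * ((1 : MatS k d) ⊗ₜ[ℂ] b)

/-- The space of double derivations `DDer(S)`. -/
def DDer : Submodule ℂ (MatS k d →ₗ[ℂ] MatS k d ⊗[ℂ] MatS k d) where
  carrier := {θ | IsDD k d θ}
  add_mem' := by
    intro θ η hθ hη a b
    simp only [LinearMap.add_apply, hθ a b, hη a b, mul_add, add_mul]
    abel
  zero_mem' := by intro a b; simp
  smul_mem' := by
    intro c θ hθ a b
    simp only [LinearMap.smul_apply, hθ a b, smul_add, mul_smul_comm, smul_mul_assoc]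

/-- The map `u ↦ (1 ⊗ s) * u * (t ⊗ 1)`, realizing the inner bimodule action
`(s·θ·t)(u) = θ(u)' t ⊗ s θ(u)''` after composition with `θ`. -/
def innerMap (s t : MatS k d) : MatS k d ⊗[ℂ] MatS k d →ₗ[ℂ] MatS k d ⊗[ℂ] MatS k d :=
  (LinearMap.mulRight ℂ (t ⊗ₜ[ℂ] (1 : MatS k d))).comp
    (LinearMap.mulLeft ℂ ((1 : MatS k d) ⊗ₜ[ℂ] s))

lemma innerMap_isDD (s t : MatS k d) (θ : MatS k d →ₗ[ℂ] MatS k d ⊗[ℂ] MatS k d)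
    (hθ : IsDD k d θ) : IsDD k d ((innerMap k d s t).comp θ) := by
  intro a b
  have h1 : ((1 : MatS k d) ⊗ₜ[ℂ] s) * (a ⊗ₜ[ℂ] (1 : MatS k d))
      = (a ⊗ₜ[ℂ] (1 : MatS k d)) * ((1 : MatS k d) ⊗ₜ[ℂ] s) := by
    simp [Algebra.TensorProduct.tmul_mul_tmul]
  have h2 : ((1 : MatS k d) ⊗ₜ[ℂ] b) * (t ⊗ₜ[ℂ] (1 : MatS k d))
      = (t ⊗ₜ[ℂ] (1 : MatS k d)) * ((1 : MatS k d) ⊗ₜ[ℂ] b) := by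
    simp [Algebra.TensorProduct.tmul_mul_tmul]
  simp only [LinearMap.comp_apply, hθ a b, innerMap, LinearMap.mulLeft_apply,
    LinearMap.mulRight_apply, mul_add, add_mul]
  congr 1
  · simp only [mul_assoc]
    rw [← mul_assoc, h1, mul_assoc]
  · simp only [mul_assoc]
    rw [h2]

/-- The inner `S`-bimodule action on `DDer(S)`:  `(s·θ·t)(u) = θ(u)' t ⊗ s θ(u)''`. -/
def innerDD (s t : MatS k d) (θ : DDer k d) : DDer k d :=
  ⟨(innerMap k d s t).comp θ.1, innerMap_isDD k d s t θ.1 θ.2⟩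

/-- The matrix unit `e^i_{pq}` of `S`. -/
def E (i : Fin k) (p q : Fin (d i)) : MatS k d :=
  Pi.single i (Matrix.single p q 1)

/-- The inner double derivation `d_x(y) = x (1 ⊗ y) - (y ⊗ 1) x`. -/
def dIn (x : MatS k d ⊗[ℂ] MatS k d) : MatS k d →ₗ[ℂ] MatS k d ⊗[ℂ] MatS k d :=
  (LinearMap.mulLeft ℂ x).comp (TensorProduct.mk ℂ (MatS k d) (MatS k d) 1)
    - (LinearMap.mulRight ℂ x).comp ((TensorProduct.mk ℂ (MatS k d) (MatS k d)).flip 1)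

lemma dIn_isDD (x : MatS k d ⊗[ℂ] MatS k d) : IsDD k d (dIn k d x) := by
  intro a b
  simp only [dIn, LinearMap.sub_apply, LinearMap.comp_apply, TensorProduct.mk_apply,
    LinearMap.flip_apply, LinearMap.mulLeft_apply, LinearMap.mulRight_apply, mul_sub, sub_mul]
  have h1 : ((1 : MatS k d) ⊗ₜ[ℂ] (a * b)) = ((1 : MatS k d) ⊗ₜ[ℂ] a) * ((1 : MatS k d) ⊗ₜ[ℂ] b) := by
    simp [Algebra.TensorProduct.tmul_mul_tmul]
  have h2 : ((a * b) ⊗ₜ[ℂ] (1 : MatS k d)) = (a ⊗ₜ[ℂ] (1 : MatS k d)) * (b ⊗ₜ[ℂ] (1 : MatS k d)) := by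
    simp [Algebra.TensorProduct.tmul_mul_tmul]
  have h3 : (a ⊗ₜ[ℂ] (1 : MatS k d)) * ((1 : MatS k d) ⊗ₜ[ℂ] b) = a ⊗ₜ[ℂ] b := by
    simp [Algebra.TensorProduct.tmul_mul_tmul]
  have h4 : ((1 : MatS k d) ⊗ₜ[ℂ] a) * (b ⊗ₜ[ℂ] (1 : MatS k d)) = b ⊗ₜ[ℂ] a := by
    simp [Algebra.TensorProduct.tmul_mul_tmul]
  rw [h1, h2]
  simp only [mul_assoc]
  abel


/-- The kernel of the map `D : S ⊗ S → DDer(S)`, `x ↦ d_x`. -/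
def Kker (k : ℕ) (d : Fin k → ℕ) : Submodule ℂ (MatS k d ⊗[ℂ] MatS k d) where
  carrier := {x | ∀ y : MatS k d,
    x * ((1 : MatS k d) ⊗ₜ[ℂ] y) = (y ⊗ₜ[ℂ] (1 : MatS k d)) * x}
  add_mem' := by
    intro x x' hx hx' y
    simp only [add_mul, mul_add, hx y, hx' y]
  zero_mem' := by intro y; simp
  smul_mem' := by
    intro c x hx y
    simp only [smul_mul_assoc, mul_smul_comm, hx y]

noncomputable instance (k : ℕ) (d : Fin k → ℕ) : AddCommGroup ↥(Kker k d) :=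
  Module.addCommMonoidToAddCommGroup ℂ

/-- The element `g^i_{ab} = ∑_p e^i_{pb} ⊗ e^i_{ap}`. -/
def g (k : ℕ) (d : Fin k → ℕ) (i : Fin k) (a b : Fin (d i)) : MatS k d ⊗[ℂ] MatS k d :=
  ∑ p : Fin (d i), (E k d i p b) ⊗ₜ[ℂ] (E k d i a p)

/-! The `g^i_{ab}` lie in the kernel by a computation on matrix units. Conversely, for `x` in the
kernel and any `b`, `(e^i_{pp} ⊗ 1) x = (e^i_{pb} ⊗ 1) x (1 ⊗ e^i_{bp})`; summed over `p`, the
right-hand side sends each `e_{αβ} ⊗ e_{γδ}` to `0` or to `g^i_{γβ}`, and `1 = ∑ e^i_{pp}` puts `x`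
in the span. For independence, the map `a ⊗ b ↦ b a` sends `g^i_{ab}` to `d_i e^i_{ab}`. -/

section

variable {k : ℕ} {d : Fin k → ℕ}

lemma E_mul_E (i : Fin k) (p q u v : Fin (d i)) :
    E k d i p q * E k d i u v = if q = u then E k d i p v else 0 := by
  rw [E, E, E, ← Pi.single_mul]
  split_ifs with h
  · rw [h, Matrix.single_mul_single_same, one_mul]
  · simp [h]

lemma E_mul_E_of_ne {i j : Fin k} (h : i ≠ j) (p q : Fin (d i)) (u v : Fin (d j)) :
    E k d i p q * E k d j u v = 0 := by
  funext m
  rcases eq_or_ne m i with rfl | hm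
  · simp [E, Pi.single_eq_of_ne h]
  · simp [E, Pi.single_eq_of_ne hm]

lemma sum_E_diag : ∑ i, ∑ p, E k d i p p = 1 := by
  funext j
  simp only [E, Finset.sum_apply]
  rw [Fintype.sum_eq_single j]
  · simp [Matrix.sum_single_one]
  · intro i hij
    simp [Pi.single_eq_of_ne' hij]

abbrev MatUnitIndex (k : ℕ) (d : Fin k → ℕ) : Type := Σ i : Fin k, Fin (d i) × Fin (d i)

def matUnitBasis (k : ℕ) (d : Fin k → ℕ) : Module.Basis (MatUnitIndex k d) ℂ (MatS k d) :=
  Pi.basis fun i => Matrix.stdBasis ℂ (Fin (d i)) (Fin (d i))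

lemma matUnitBasis_apply (t : MatUnitIndex k d) :
    matUnitBasis k d t = E k d t.1 t.2.1 t.2.2 := by
  obtain ⟨i, p, q⟩ := t
  simp [matUnitBasis, E, Matrix.stdBasis_eq_single]

def gFamily (k : ℕ) (d : Fin k → ℕ) (t : MatUnitIndex k d) : MatS k d ⊗[ℂ] MatS k d :=
  g k d t.1 t.2.1 t.2.2

lemma gFamily_mem_Kker (t : MatUnitIndex k d) : gFamily k d t ∈ Kker k d := by
  obtain ⟨i, a, b⟩ := t
  suffices (LinearMap.mulLeft ℂ (g k d i a b)).comp (TensorProduct.mk ℂ _ _ 1)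
      = (LinearMap.mulRight ℂ (g k d i a b)).comp ((TensorProduct.mk ℂ _ _).flip 1) from
    fun y => LinearMap.congr_fun this y
  refine (matUnitBasis k d).ext fun ⟨j, u, v⟩ => ?_
  simp only [LinearMap.comp_apply, TensorProduct.mk_apply, LinearMap.flip_apply,
    LinearMap.mulLeft_apply, LinearMap.mulRight_apply, matUnitBasis_apply, g, Finset.sum_mul,
    Finset.mul_sum, Algebra.TensorProduct.tmul_mul_tmul, mul_one, one_mul]
  rcases eq_or_ne i j with rfl | hij
  · simp [E_mul_E, TensorProduct.tmul_ite, TensorProduct.ite_tmul]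
  · simp [E_mul_E_of_ne hij, E_mul_E_of_ne hij.symm]

lemma sum_sandwich_mem_span_gFamily (i : Fin k) (b : Fin (d i)) (y : MatS k d ⊗[ℂ] MatS k d) :
    ∑ p, (E k d i p b ⊗ₜ[ℂ] (1 : MatS k d)) * y * ((1 : MatS k d) ⊗ₜ[ℂ] E k d i b p)
      ∈ Submodule.span ℂ (Set.range (gFamily k d)) := by
  induction ((matUnitBasis k d).tensorProduct (matUnitBasis k d)).mem_span y
    using Submodule.span_induction with
  | mem _ hy =>
    obtain ⟨⟨⟨j, α, β⟩, ⟨j', γ, δ⟩⟩, rfl⟩ := hy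
    simp only [Module.Basis.tensorProduct_apply, matUnitBasis_apply,
      Algebra.TensorProduct.tmul_mul_tmul, mul_one, one_mul]
    rcases eq_or_ne i j with rfl | hj
    · rcases eq_or_ne j' i with rfl | hj'
      · by_cases hα : b = α
        · by_cases hδ : δ = b
          · subst hα hδ
            simp only [E_mul_E]
            exact Submodule.subset_span ⟨⟨j', γ, β⟩, rfl⟩
          · simp [E_mul_E, hδ]
        · simp [E_mul_E, hα]
      · simp [E_mul_E_of_ne hj']
    · simp [E_mul_E_of_ne hj]
  | zero => simp
  | add y z _ _ hy hz =>
    simpa only [mul_add, add_mul, Finset.sum_add_distrib] using add_mem hy hz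
  | smul c y _ hy =>
    simpa only [mul_smul_comm, smul_mul_assoc, ← Finset.smul_sum] using Submodule.smul_mem _ c hy

lemma mem_span_gFamily_of_mem_Kker {x : MatS k d ⊗[ℂ] MatS k d} (hx : x ∈ Kker k d) :
    x ∈ Submodule.span ℂ (Set.range (gFamily k d)) := by
  have hx' : ∀ y : MatS k d, x * (1 ⊗ₜ[ℂ] y) = (y ⊗ₜ[ℂ] 1) * x := hx
  have hdecomp : x = ∑ i, ∑ p, (E k d i p p ⊗ₜ[ℂ] (1 : MatS k d)) * x := by
    simp only [← Finset.sum_mul, ← TensorProduct.sum_tmul, sum_E_diag,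
      ← Algebra.TensorProduct.one_def, one_mul]
  rw [hdecomp]
  refine Submodule.sum_mem _ fun i _ => ?_
  rcases isEmpty_or_nonempty (Fin (d i)) with _ | ⟨⟨b⟩⟩
  · simp [Finset.univ_eq_empty]
  · have hsandwich : ∀ p, (E k d i p p ⊗ₜ[ℂ] (1 : MatS k d)) * x
        = (E k d i p b ⊗ₜ[ℂ] 1) * x * (1 ⊗ₜ[ℂ] E k d i b p) := by
      intro p
      rw [mul_assoc, hx', ← mul_assoc, Algebra.TensorProduct.tmul_mul_tmul, E_mul_E, if_pos rfl,
        one_mul]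
    simp only [hsandwich]
    exact sum_sandwich_mem_span_gFamily i b x

lemma Kker_eq_span_gFamily : Kker k d = Submodule.span ℂ (Set.range (gFamily k d)) :=
  le_antisymm (fun _ hx => mem_span_gFamily_of_mem_Kker hx)
    (Submodule.span_le.2 (Set.range_subset_iff.2 gFamily_mem_Kker))

lemma mul'_comm_g (i : Fin k) (a b : Fin (d i)) :
    LinearMap.mul' ℂ (MatS k d) (TensorProduct.comm ℂ _ _ (g k d i a b))
      = (d i : ℂ) • E k d i a b := by
  simp only [g, map_sum, TensorProduct.comm_tmul, LinearMap.mul'_apply, E_mul_E, if_true,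
    Finset.sum_const, Finset.card_univ, Fintype.card_fin]
  exact (Nat.cast_smul_eq_nsmul ℂ _ _).symm

lemma linearIndependent_gFamily : LinearIndependent ℂ (gFamily k d) := by
  let w : MatUnitIndex k d → ℂˣ := fun t =>
    Units.mk0 (d t.1 : ℂ) (Nat.cast_ne_zero.2 t.2.1.pos.ne')
  have hcomp :
      (LinearMap.mul' ℂ (MatS k d) ∘ₗ (TensorProduct.comm ℂ _ _).toLinearMap) ∘ gFamily k d
        = w • matUnitBasis k d := by
    funext ⟨i, a, b⟩
    simp [w, gFamily, mul'_comm_g, matUnitBasis_apply, Units.smul_def]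
  exact LinearIndependent.of_comp _ (hcomp ▸ (matUnitBasis k d).linearIndependent.units_smul w)

end

/-- The kernel of `D : S ⊗ S → DDer(S)` is spanned by the linearly
independent elements `g^i_{ab} = ∑_p e^i_{pb} ⊗ e^i_{ap}`; hence it has dimension `∑ d i ^ 2`
and is isomorphic, as a ℂ-vector space, to `M_{d 1}(ℂ) ⊕ ⋯ ⊕ M_{d k}(ℂ)`. -/
theorem kernel_of_inner_double_derivations (k : ℕ) (d : Fin k → ℕ) :
    Kker k d = Submodule.span ℂ
        (Set.range fun t : Σ i : Fin k, Fin (d i) × Fin (d i) => g k d t.1 t.2.1 t.2.2) ∧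
    LinearIndependent ℂ
      (fun t : Σ i : Fin k, Fin (d i) × Fin (d i) => g k d t.1 t.2.1 t.2.2) ∧
    Module.finrank ℂ ↥(Kker k d) = ∑ i, d i ^ 2 ∧
    Nonempty (↥(Kker k d) ≃ₗ[ℂ] MatS k d) := by
  let kerBasis : Module.Basis (MatUnitIndex k d) ℂ (Kker k d) :=
    (Module.Basis.span linearIndependent_gFamily).map
      (LinearEquiv.ofEq _ _ Kker_eq_span_gFamily.symm)
  refine ⟨Kker_eq_span_gFamily, linearIndependent_gFamily, ?_,
    ⟨kerBasis.equiv (matUnitBasis k d) (Equiv.refl _)⟩⟩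
  rw [Module.finrank_eq_card_basis kerBasis]
  simp [Fintype.card_sigma, sq]
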